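/- If 𝓔 and 𝓝 are independent random variables, 𝓔 having an exponential distribution of mean 1 and 𝓝 a standard Gaussian distribution, then for every s ≥ 0 one has E[exp(−s · 𝓔²/𝓝²)] = 1/(1 + √(2s)). -/

import Mathlib

/-!
Conditionally on `𝓔 = x` one averages `exp (-(a / 𝓝²))` with `a = s x²`. Completing the square,
`t² / 2 + a / t² = (t - c / t)² / 2 + c` with `c = √(2a)`. The Cauchy–Schlömilch substitution
`u = t - c / t` maps `(0, ∞)` onto `ℝ`, and its Jacobian `1 + c / t²` splits into two halves that
are exchanged by the involution `t ↦ c / t`; hence `∫₀^∞ F (t - c / t) dt = ½ ∫ F` for even `F`,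
and `E[exp (-(a / 𝓝²))] = exp (-√(2a)) = exp (-√(2s) |x|)`. Averaging over `x` gives the Laplace
transform `1 / (1 + λ)` of the exponential law at `λ = √(2s)`.
-/

open MeasureTheory ProbabilityTheory Filter Set Topology
open Real

section CauchySchlomilch

variable {E : Type*} [NormedAddCommGroup E] [NormedSpace ℝ E] {c : ℝ}

lemma hasDerivAt_sub_div {x : ℝ} (hx : x ≠ 0) :
    HasDerivAt (fun x => x - c / x) (1 + c / x ^ 2) x :=
  ((hasDerivAt_id x).sub ((hasDerivAt_inv hx).const_mul c)).congr_deriv (by field_simp; ring)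

lemma strictMonoOn_sub_div (hc : 0 ≤ c) : StrictMonoOn (fun x => x - c / x) (Ioi 0) := by
  intro x hx y _ hxy
  have : c / y ≤ c / x := div_le_div_of_nonneg_left hc hx hxy.le
  dsimp only
  linarith

lemma image_sub_div_Ioi (hc : 0 < c) : (fun x => x - c / x) '' Ioi 0 = univ := by
  refine eq_univ_of_forall fun u => ?_
  -- the preimage of `u` is the positive root of `t² - u t - c`
  set r := √(u ^ 2 + 4 * c)
  have hr : r ^ 2 = u ^ 2 + 4 * c := sq_sqrt (by positivity)
  have hpos : 0 < u + r := by
    have : |u| < r := by rw [← sqrt_sq_eq_abs]; exact sqrt_lt_sqrt (sq_nonneg u) (by linarith)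
    linarith [neg_abs_le u]
  refine ⟨(u + r) / 2, half_pos hpos, ?_⟩
  field_simp
  linear_combination hr

lemma div_sub_div_div (hc : c ≠ 0) (x : ℝ) : c / x - c / (c / x) = -(x - c / x) := by
  rw [div_div_cancel₀ hc]; ring

lemma integral_Ioi_comp_div (hc : 0 < c) (g : ℝ → E) :
    ∫ x in Ioi 0, (c / x ^ 2) • g (c / x) = ∫ y in Ioi 0, g y := by
  have himage : (fun x => c / x) '' Ioi 0 = Ioi 0 := by
    ext y
    refine ⟨?_, fun hy => ⟨c / y, div_pos hc hy, div_div_cancel₀ hc.ne'⟩⟩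
    rintro ⟨x, hx, rfl⟩
    exact div_pos hc hx
  have hderiv : ∀ x ∈ Ioi (0 : ℝ),
      HasDerivWithinAt (fun x => c / x) (-(c / x ^ 2)) (Ioi 0) x := fun x hx =>
    (((hasDerivAt_inv (ne_of_gt hx)).const_mul c).congr_deriv (by ring)).hasDerivWithinAt
  have hinj : InjOn (fun x => c / x) (Ioi 0) := fun x _ y _ h => by
    simpa [div_div_cancel₀ hc.ne'] using congrArg (c / ·) h
  conv_rhs => rw [← himage, integral_image_eq_integral_abs_deriv_smul measurableSet_Ioi hderiv hinj]
  refine setIntegral_congr_fun measurableSet_Ioi fun x hx => ?_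
  have : 0 < x := hx
  rw [abs_neg, abs_of_pos (show 0 < c / x ^ 2 by positivity)]

theorem integral_Ioi_comp_sub_div_of_even (hc : 0 < c) {F : ℝ → E} (hF : Integrable F)
    (heven : ∀ u, F (-u) = F u) :
    ∫ x in Ioi 0, F (x - c / x) = (2 : ℝ)⁻¹ • ∫ u, F u := by
  set φ : ℝ → ℝ := fun x => x - c / x
  have hφ' : ∀ x ∈ Ioi (0 : ℝ), HasDerivWithinAt φ (1 + c / x ^ 2) (Ioi 0) x :=
    fun x hx => (hasDerivAt_sub_div (ne_of_gt hx)).hasDerivWithinAt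
  have hφinj : InjOn φ (Ioi 0) := (strictMonoOn_sub_div hc.le).injOn
  have habs : ∀ x : ℝ, |1 + c / x ^ 2| = 1 + c / x ^ 2 := fun x => abs_of_pos (by positivity)
  have hsubst : ∫ u, F u = ∫ x in Ioi 0, (1 + c / x ^ 2) • F (φ x) := by
    rw [← setIntegral_univ, ← image_sub_div_Ioi hc,
      integral_image_eq_integral_abs_deriv_smul measurableSet_Ioi hφ' hφinj]
    simp only [habs]
  have hG : IntegrableOn (fun x => (1 + c / x ^ 2) • F (φ x)) (Ioi 0) := by
    have := (integrableOn_image_iff_integrableOn_abs_deriv_smul measurableSet_Ioi hφ' hφinj F).mp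
      (by rw [image_sub_div_Ioi hc]; exact hF.integrableOn)
    simpa only [habs] using this
  have hFφ : IntegrableOn (fun x => F (φ x)) (Ioi 0) := by
    have hbound : ∀ x : ℝ, ‖(1 + c / x ^ 2)⁻¹‖ ≤ 1 := fun x => by
      rw [norm_inv, Real.norm_of_nonneg (by positivity)]
      exact inv_le_one_of_one_le₀ (le_add_of_nonneg_right (by positivity))
    have hmeas : Measurable fun x : ℝ => (1 + c / x ^ 2)⁻¹ := by fun_prop
    refine IntegrableOn.congr_fun (hG.bdd_smul 1 hmeas.aestronglyMeasurable
      (ae_of_all _ hbound)) (fun x _ => ?_) measurableSet_Ioi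
    simp only [Pi.smul_apply', inv_smul_smul₀ (show 1 + c / x ^ 2 ≠ 0 by positivity)]
  have hsymm : ∫ x in Ioi 0, (c / x ^ 2) • F (φ x) = ∫ x in Ioi 0, F (φ x) := by
    rw [← integral_Ioi_comp_div hc (fun y => F (φ y))]
    refine setIntegral_congr_fun measurableSet_Ioi fun x _ => ?_
    simp only [φ, div_sub_div_div hc.ne', heven]
  have hsplit : ∀ x, (1 + c / x ^ 2) • F (φ x) = F (φ x) + (c / x ^ 2) • F (φ x) :=
    fun x => by rw [add_smul, one_smul]
  have hrest : IntegrableOn (fun x => (c / x ^ 2) • F (φ x)) (Ioi 0) :=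
    (hG.sub hFφ).congr_fun (fun x _ => by simp only [Pi.sub_apply, hsplit, add_sub_cancel_left])
      measurableSet_Ioi
  rw [hsubst, setIntegral_congr_fun measurableSet_Ioi (fun x _ => hsplit x),
    integral_add hFφ hrest, hsymm, ← two_smul ℝ, smul_smul, inv_mul_cancel₀ two_ne_zero, one_smul]

end CauchySchlomilch

lemma gaussianPDFReal_neg (v : NNReal) (u : ℝ) :
    gaussianPDFReal 0 v (-u) = gaussianPDFReal 0 v u := by
  simp [gaussianPDFReal]

lemma gaussianPDFReal_mul_exp_neg_div_sq {a c t : ℝ} (hc : c ^ 2 = 2 * a) (ht : t ≠ 0) :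
    gaussianPDFReal 0 1 t * exp (-(a / t ^ 2)) = exp (-c) * gaussianPDFReal 0 1 (t - c / t) := by
  simp only [gaussianPDFReal, NNReal.coe_one, sub_zero, mul_one]
  rw [mul_left_comm, mul_assoc, ← exp_add, ← exp_add]
  congr 2
  field_simp
  linear_combination hc

lemma integral_exp_neg_div_sq_gaussianReal {a : ℝ} (ha : 0 ≤ a) :
    ∫ n, exp (-(a / n ^ 2)) ∂gaussianReal 0 1 = exp (-√(2 * a)) := by
  rcases ha.eq_or_lt with rfl | ha
  · simp
  set c := √(2 * a)
  have hc : 0 < c := by positivity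
  have hc2 : c ^ 2 = 2 * a := sq_sqrt (by positivity)
  rw [integral_gaussianReal_eq_integral_smul one_ne_zero]
  calc ∫ n, gaussianPDFReal 0 1 n • exp (-(a / n ^ 2))
      = ∫ n, (fun t => gaussianPDFReal 0 1 t * exp (-(a / t ^ 2))) |n| := by
        congr 1 with n
        rcases abs_choice n with h | h <;> simp [h, gaussianPDFReal_neg 1]
    _ = 2 * ∫ t in Ioi 0, gaussianPDFReal 0 1 t * exp (-(a / t ^ 2)) :=
        integral_comp_abs (f := fun t => gaussianPDFReal 0 1 t * exp (-(a / t ^ 2)))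
    _ = 2 * ∫ t in Ioi 0, exp (-c) * gaussianPDFReal 0 1 (t - c / t) := by
        congr 1
        exact setIntegral_congr_fun measurableSet_Ioi fun t ht =>
          gaussianPDFReal_mul_exp_neg_div_sq hc2 (ne_of_gt ht)
    _ = exp (-c) := by
        rw [integral_const_mul, integral_Ioi_comp_sub_div_of_even hc
          (integrable_gaussianPDFReal 0 1) (gaussianPDFReal_neg 1),
          integral_gaussianPDFReal_eq_one 0 one_ne_zero, smul_eq_mul, mul_one]
        ring

lemma integral_exp_neg_mul_abs_expMeasure {r c : ℝ} (hr : 0 < r) (hc : 0 ≤ c) :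
    ∫ x, exp (-(c * |x|)) ∂expMeasure r = r / (r + c) := by
  have hdensity : ∀ x, (gammaPDF 1 r x).toReal • exp (-(c * |x|)) =
      (Ici 0).indicator (fun x => r * exp (-(r + c) * x)) x := by
    intro x
    rw [gammaPDF, ENNReal.toReal_ofReal (gammaPDFReal_nonneg one_pos hr x), smul_eq_mul]
    by_cases hx : 0 ≤ x
    · simp only [gammaPDFReal, if_pos hx, indicator_of_mem (mem_Ici.mpr hx), abs_of_nonneg hx,
        rpow_one, Gamma_one, div_one, sub_self, rpow_zero, mul_one, mul_assoc, ← exp_add]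
      ring_nf
    · simp [gammaPDFReal, hx]
  rw [expMeasure, gammaMeasure, integral_withDensity_eq_integral_toReal_smul (f := gammaPDF 1 r)
    (measurable_gammaPDFReal 1 r).ennreal_ofReal (ae_of_all _ fun _ => ENNReal.ofReal_lt_top)]
  simp only [hdensity]
  rw [integral_indicator measurableSet_Ici, integral_Ici_eq_integral_Ioi, integral_const_mul,
    integral_exp_mul_Ioi (by linarith), mul_zero, exp_zero]
  field_simp

theorem statement17_general
    {Ω : Type*} [MeasurableSpace Ω] (μ : Measure Ω)
    (E N : Ω → ℝ) (hEmeas : Measurable E) (hNmeas : Measurable N)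
    (hE : Measure.map E μ = expMeasure 1)
    (hN : Measure.map N μ = gaussianReal 0 1)
    (hEN : IndepFun E N μ) :
    ∀ s : ℝ, 0 ≤ s →
      ∫ ω, Real.exp (-(s * (E ω) ^ 2 / (N ω) ^ 2)) ∂μ = 1 / (1 + Real.sqrt (2 * s)) := by
  intro s hs
  have : IsProbabilityMeasure (expMeasure 1) := isProbabilityMeasure_expMeasure one_pos
  have hjoint : μ.map (fun ω => (E ω, N ω)) = (expMeasure 1).prod (gaussianReal 0 1) := by
    have hσE : SigmaFinite (μ.map E) := hE ▸ inferInstance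
    have hσN : SigmaFinite (μ.map N) := hN ▸ inferInstance
    rw [← hE, ← hN]
    exact (indepFun_iff_map_prod_eq_prod_map_map' hEmeas.aemeasurable hNmeas.aemeasurable
      hσE hσN).mp hEN
  set f : ℝ × ℝ → ℝ := fun p => exp (-(s * p.1 ^ 2 / p.2 ^ 2))
  have hf : Measurable f := by fun_prop
  have hf_int : Integrable f ((expMeasure 1).prod (gaussianReal 0 1)) :=
    .of_bound hf.aestronglyMeasurable 1 (ae_of_all _ fun p => by
      rw [norm_of_nonneg (exp_pos _).le, exp_le_one_iff, neg_nonpos]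
      positivity)
  calc ∫ ω, f (E ω, N ω) ∂μ = ∫ p, f p ∂(expMeasure 1).prod (gaussianReal 0 1) := by
        rw [← hjoint, integral_map (hEmeas.prodMk hNmeas).aemeasurable hf.aestronglyMeasurable]
    _ = ∫ x, ∫ n, f (x, n) ∂gaussianReal 0 1 ∂expMeasure 1 := integral_prod f hf_int
    _ = ∫ x, exp (-(√(2 * s) * |x|)) ∂expMeasure 1 := by
        congr 1 with x
        dsimp only [f]
        rw [integral_exp_neg_div_sq_gaussianReal (by positivity), ← mul_assoc,
          sqrt_mul (by positivity), sqrt_sq_eq_abs]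
    _ = 1 / (1 + √(2 * s)) := by
        rw [integral_exp_neg_mul_abs_expMeasure one_pos (sqrt_nonneg _)]

/-- If `𝓔` and `𝓝` are independent, `𝓔` exponential of mean `1` and `𝓝`
standard Gaussian, then for every `s ≥ 0`, `E[exp(-s 𝓔²/𝓝²)] = 1/(1 + √(2s))`. -/
theorem statement17
    {Ω : Type*} [MeasurableSpace Ω] (μ : Measure Ω) [IsProbabilityMeasure μ]
    (E N : Ω → ℝ) (hEmeas : Measurable E) (hNmeas : Measurable N)
    (hE : Measure.map E μ = expMeasure 1)
    (hN : Measure.map N μ = gaussianReal 0 1)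
    (hEN : IndepFun E N μ) :
    ∀ s : ℝ, 0 ≤ s →
      ∫ ω, Real.exp (-(s * (E ω) ^ 2 / (N ω) ^ 2)) ∂μ = 1 / (1 + Real.sqrt (2 * s)) :=
  statement17_general μ E N hEmeas hNmeas hE hN hEN
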